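/- arXiv:0910.0083 — 3 statements merged into one kernel-verified Lean document; each statement's English description precedes it below -/
import Mathlib

section
/- For r+1 variables x_1, ..., x_{r+1} (all distinct), the identity ∑_{i=1}^{r+1} ∏_{j ≠ i} (t x_i - x_j)/(x_i - x_j) = 1 + t + t^2 + ... + t^r holds. -/
/-!
Let `L_i = ∏_{j ≠ i} (X - x_j)/(x_i - x_j)` be the Lagrange basis polynomials, so the left-hand
side is `∑_i L_i(t x_i)`. Writing `L_i = ∑_k c_{ik} X^k`, it equals `∑_k t^k ∑_i c_{ik} x_i^k`.
Since `X^k` has degree `≤ r` it is its own interpolant, `X^k = ∑_i x_i^k L_i`, and comparing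
coefficients of `X^k` gives `∑_i c_{ik} x_i^k = 1` for every `k ≤ r`.
-/

open Finset Polynomial

namespace Lagrange

variable {F ι : Type*} [Field F] [DecidableEq ι] {s : Finset ι} {v : ι → F}

theorem eval_basis (i : ι) (y : F) :
    (Lagrange.basis s v i).eval y = ∏ j ∈ s.erase i, (y - v j) / (v i - v j) := by
  rw [Lagrange.basis, eval_prod]
  refine prod_congr rfl fun j _ => ?_
  simp [basisDivisor, div_eq_mul_inv, mul_comm]

theorem coeff_eq_sum_eval_mul_coeff_basis (hvs : Set.InjOn v s) {P : F[X]}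
    (hP : P.degree < #s) (k : ℕ) :
    P.coeff k = ∑ i ∈ s, P.eval (v i) * (Lagrange.basis s v i).coeff k := by
  conv_lhs => rw [eq_interpolate hvs hP]
  simp only [interpolate_apply, finsetSum_coeff, coeff_C_mul]

theorem sum_coeff_basis_mul_pow_self (hvs : Set.InjOn v s) {k : ℕ} (hk : k < #s) :
    ∑ i ∈ s, (Lagrange.basis s v i).coeff k * v i ^ k = 1 := by
  have hdeg : (X ^ k : F[X]).degree < #s := by
    rw [degree_X_pow]
    exact_mod_cast hk
  simpa [mul_comm] using (coeff_eq_sum_eval_mul_coeff_basis hvs hdeg k).symm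

theorem sum_eval_basis_mul_self (hvs : Set.InjOn v s) (t : F) :
    ∑ i ∈ s, (Lagrange.basis s v i).eval (t * v i) = ∑ k ∈ range #s, t ^ k := by
  have hexpand : ∀ i ∈ s, (Lagrange.basis s v i).eval (t * v i) =
      ∑ k ∈ range #s, (Lagrange.basis s v i).coeff k * v i ^ k * t ^ k := by
    intro i hi
    rw [eval_eq_sum_range' (n := #s) (by
      rw [natDegree_basis hvs hi]; exact Nat.sub_lt (card_pos.mpr ⟨i, hi⟩) one_pos)]
    exact sum_congr rfl fun k _ => by ring
  calc ∑ i ∈ s, (Lagrange.basis s v i).eval (t * v i)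
      = ∑ k ∈ range #s, (∑ i ∈ s, (Lagrange.basis s v i).coeff k * v i ^ k) * t ^ k := by
        rw [sum_congr rfl hexpand, sum_comm]
        simp only [sum_mul]
    _ = ∑ k ∈ range #s, t ^ k :=
        sum_congr rfl fun k hk => by
          rw [sum_coeff_basis_mul_pow_self hvs (mem_range.mp hk), one_mul]

end Lagrange

/-- For pairwise distinct elements `x_1, …, x_{r+1}` of a field and any `t`,
`∑_{i=1}^{r+1} ∏_{j ≠ i} (t x_i - x_j)/(x_i - x_j) = 1 + t + t² + ⋯ + t^r`. -/
theorem sum_prod_ratio_eq_tInt (F : Type*) [Field F] (r : ℕ)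
    (x : Fin (r + 1) → F) (hx : Function.Injective x) (t : F) :
    ∑ i : Fin (r + 1), ∏ j ∈ Finset.univ.erase i, (t * x i - x j) / (x i - x j)
      = ∑ k ∈ Finset.range (r + 1), t ^ k := by
  simp_rw [← Lagrange.eval_basis]
  simpa using Lagrange.sum_eval_basis_mul_self (s := univ) hx.injOn t
end

section
/- The identity s_λ(q^ρ) s_μ(q^{λ+ρ}) = s_μ(q^ρ) s_λ(q^{μ+ρ}) holds for all partitions λ, μ, where s_λ(q^{μ+ρ}) denotes the principal specialization of the Schur function at x_i = q^{μ_i + 1/2 - i} (in the stable sense with power sums p_n(q^{μ+ρ}) = ∑_{i=1}^{ℓ} (q^{nμ_i}-1) q^{n(1/2-i)} + 1/(q^{n/2}-q^{-n/2})). -/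
open Finset MvPolynomial

variable (K : Type*) [Field K]

/-- The Vandermonde polynomial `∏_{i<j} (x_i - x_j)`. -/
noncomputable def vander (N : ℕ) : MvPolynomial (Fin N) K :=
  ∏ p ∈ Finset.univ.filter (fun p : Fin N × Fin N => p.1 < p.2), (X p.1 - X p.2)

/-- The bialternant `∑_σ sign(σ) ∏_i x_{σ(i)}^{λ_i + N - i}` (indices `1 ≤ i ≤ N`). -/
noncomputable def schurAlternant (N : ℕ) (lam : Fin N → ℕ) : MvPolynomial (Fin N) K :=
  ∑ σ : Equiv.Perm (Fin N),
    (Equiv.Perm.sign σ : ℤ) • ∏ i, X (σ i) ^ (lam i + (N - 1 - (i : ℕ)))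

/-- `S` is the Schur polynomial `s_λ(x₁,…,x_N)`, characterized by the bialternant formula
`s_λ · ∏_{i<j}(x_i - x_j) = ∑_σ sign(σ) ∏_i x_{σ(i)}^{λ_i + N - i}`. -/
def IsSchur (N : ℕ) (lam : Fin N → ℕ) (S : MvPolynomial (Fin N) K) : Prop :=
  S * vander K N = schurAlternant K N lam

/-- Evaluation of a symmetric function written as a polynomial in the power sums
(variable `n` stands for `p_{n+1}`) in `N` variables `x₁,…,x_N`. -/
noncomputable def toVars (N : ℕ) (f : MvPolynomial ℕ K) : MvPolynomial (Fin N) K :=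
  MvPolynomial.aeval (fun n => MvPolynomial.psum (Fin N) K (n + 1)) f

/-- The principal specialization `q^{μ+ρ}`: the value substituted for the power sum `p_n`,
namely `p_n(q^{μ+ρ}) = ∑_{i=1}^{ℓ} (q^{nμ_i} - 1) q^{n(1/2-i)} + 1/(q^{n/2} - q^{-n/2})`,
written in terms of `s = q^{1/2}`. -/
noncomputable def schurSpec (s : K) (Lmu : ℕ) (mu : ℕ → ℕ) : ℕ → K :=
  fun m =>
    (∑ i ∈ Finset.range Lmu,
        (s ^ (2 * (m + 1) * mu i) - 1) * (s⁻¹) ^ ((m + 1) * (2 * i + 1))) +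
      (s ^ (m + 1) - (s⁻¹) ^ (m + 1))⁻¹

/-! Fix `N ≥ ℓ(λ), ℓ(μ)` and specialize to the `N` points `x_i = q^{ν_i - i + 1/2}`
(`1 ≤ i ≤ N`), a geometric family `c q^{(ν+δ)_i}` with `δ = (N-1, …, 0)`. At these points the
alternant is `a_{λ+δ}(x) = c^{|λ+δ|} det (q^{(ν+δ)_i (λ+δ)_j})`, so `c^{|ν+δ|} a_{λ+δ}` is
symmetric in `ν` and `λ`; with `s_λ = a_{λ+δ} / a_δ` this gives the identity in `N` variables.
The `N`-point power sums differ from `p_n(q^{ν+ρ})` only by `t^n / (q^{n/2} - q^{-n/2})` with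
`t = q^{-N}`, so both sides of the identity are polynomials in `t` that agree at the infinitely
many points `q^{-N}`, hence also at `t = 0`. -/

variable {K}

section Alternant

variable {N : ℕ}

def shifted (N : ℕ) (ν : Fin N → ℕ) : Fin N → ℕ := fun i => ν i + (N - 1 - i)

theorem schurAlternant_eq_det (lam : Fin N → ℕ) :
    schurAlternant K N lam
      = (Matrix.of fun i j => (X i : MvPolynomial (Fin N) K) ^ shifted N lam j).det := by
  rw [Matrix.det_apply]
  refine sum_congr rfl fun σ _ => ?_
  rw [Units.smul_def]
  rfl

theorem aeval_schurAlternant (x : Fin N → K) (lam : Fin N → ℕ) :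
    aeval x (schurAlternant K N lam) = (Matrix.of fun i j => x i ^ shifted N lam j).det := by
  rw [schurAlternant_eq_det, AlgHom.map_det]
  congr 1
  ext i j
  simp

theorem prod_filter_lt_eq_prod_prod_Ioi {M : Type*} [CommMonoid M] (f : Fin N → Fin N → M) :
    ∏ p ∈ univ.filter (fun p : Fin N × Fin N => p.1 < p.2), f p.1 p.2
      = ∏ i, ∏ j ∈ Ioi i, f i j := by
  rw [prod_filter, Fintype.prod_prod_type]
  refine prod_congr rfl fun i _ => ?_
  rw [← prod_filter]
  congr 1
  ext j
  simp

theorem vander_eq_schurAlternant_zero : vander K N = schurAlternant K N 0 := by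
  rw [schurAlternant_eq_det, vander, prod_filter_lt_eq_prod_prod_Ioi (fun i j => X i - X j)]
  have h := Matrix.det_projVandermonde (1 : Fin N → MvPolynomial (Fin N) K) X
  simp only [Pi.one_apply, one_mul] at h
  rw [← h]
  congr 1
  ext i j : 1
  simp [Matrix.projVandermonde, Matrix.rectVandermonde, shifted, Nat.sub_sub, Nat.add_comm 1]

theorem aeval_vander_ne_zero {x : Fin N → K} (hx : Function.Injective x) :
    aeval x (vander K N) ≠ 0 := by
  simp only [vander, map_prod, map_sub, aeval_X]
  exact prod_ne_zero_iff.2 fun p hp => sub_ne_zero.2 (hx.ne (mem_filter.1 hp).2.ne)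

theorem IsSchur.aeval_eq_div {lam : Fin N → ℕ} {S : MvPolynomial (Fin N) K}
    (h : IsSchur K N lam S) {x : Fin N → K} (hx : Function.Injective x) :
    aeval x S = aeval x (schurAlternant K N lam) / aeval x (schurAlternant K N 0) := by
  rw [← vander_eq_schurAlternant_zero, eq_div_iff (aeval_vander_ne_zero hx), ← map_mul, h]

end Alternant

section GeometricPoints

variable {N : ℕ}

def geomPoint (c q : K) (N : ℕ) (ν : Fin N → ℕ) : Fin N → K :=
  fun i => c * q ^ shifted N ν i

theorem aeval_schurAlternant_geomPoint (c q : K) (ν lam : Fin N → ℕ) :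
    aeval (geomPoint c q N ν) (schurAlternant K N lam)
      = c ^ (∑ i, shifted N lam i)
          * (Matrix.of fun i j => q ^ (shifted N ν i * shifted N lam j)).det := by
  rw [aeval_schurAlternant, ← prod_pow_eq_pow_sum, ← Matrix.det_mul_row]
  congr 1
  ext i j
  simp [geomPoint, mul_pow, pow_mul]

theorem schurAlternant_geomPoint_reciprocity (c q : K) (ν lam : Fin N → ℕ) :
    c ^ (∑ i, shifted N ν i) * aeval (geomPoint c q N ν) (schurAlternant K N lam)
      = c ^ (∑ i, shifted N lam i) * aeval (geomPoint c q N lam) (schurAlternant K N ν) := by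
  have h : (Matrix.of fun i j => q ^ (shifted N ν i * shifted N lam j))
      = (Matrix.of fun i j => q ^ (shifted N lam i * shifted N ν j)).transpose := by
    ext i j
    simp [mul_comm]
  rw [aeval_schurAlternant_geomPoint, aeval_schurAlternant_geomPoint, h, Matrix.det_transpose]
  ring

theorem shifted_strictAnti {ν : Fin N → ℕ} (hν : Antitone ν) : StrictAnti (shifted N ν) :=
  fun i j hij => by
    have := hν hij.le
    have := j.2
    simp only [shifted]
    omega

theorem geomPoint_injective {c q : K} (hc : c ≠ 0) (hq : Function.Injective (q ^ · : ℕ → K))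
    {ν : Fin N → ℕ} (hν : Antitone ν) : Function.Injective (geomPoint c q N ν) :=
  fun _ _ h => (shifted_strictAnti hν).injective (hq (mul_left_cancel₀ hc h))

theorem IsSchur.aeval_geomPoint_symmetry {c q : K} (hc : c ≠ 0)
    (hq : Function.Injective (q ^ · : ℕ → K)) {lam mu : Fin N → ℕ} (hlam : Antitone lam)
    (hmu : Antitone mu) {Sl Sm : MvPolynomial (Fin N) K} (hl : IsSchur K N lam Sl)
    (hm : IsSchur K N mu Sm) :
    aeval (geomPoint c q N 0) Sl * aeval (geomPoint c q N lam) Sm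
      = aeval (geomPoint c q N 0) Sm * aeval (geomPoint c q N mu) Sl := by
  have h0 : Antitone (0 : Fin N → ℕ) := antitone_const
  have hinj := @geomPoint_injective K _ N c q hc hq
  have hA : ∀ {ν : Fin N → ℕ}, Antitone ν →
      aeval (geomPoint c q N ν) (schurAlternant K N 0) ≠ 0 :=
    fun hν => vander_eq_schurAlternant_zero (K := K) (N := N) ▸ aeval_vander_ne_zero (hinj hν)
  have hw : ∀ ν : Fin N → ℕ, c ^ (∑ i, shifted N ν i) ≠ 0 := fun _ => pow_ne_zero _ hc
  have r0l := schurAlternant_geomPoint_reciprocity c q 0 lam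
  have r0m := schurAlternant_geomPoint_reciprocity c q 0 mu
  have rlm := schurAlternant_geomPoint_reciprocity c q lam mu
  rw [hl.aeval_eq_div (hinj h0), hm.aeval_eq_div (hinj hlam), hm.aeval_eq_div (hinj h0),
    hl.aeval_eq_div (hinj hmu), div_mul_div_comm, div_mul_div_comm,
    div_eq_div_iff (mul_ne_zero (hA h0) (hA hlam)) (mul_ne_zero (hA h0) (hA hmu))]
  refine mul_left_cancel₀ (mul_ne_zero (hw 0) (hw lam)) ?_
  set A := fun ν κ : Fin N → ℕ => aeval (geomPoint c q N ν) (schurAlternant K N κ)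
  set wl := c ^ (∑ i, shifted N lam i)
  linear_combination (wl * A lam mu * A 0 0 * A mu 0) * r0l
    + (wl * A lam 0 * A 0 0 * A mu 0) * rlm - (wl * A 0 0 * A lam 0 * A mu lam) * r0m

end GeometricPoints

section Specialization

theorem aeval_toVars (N : ℕ) (x : Fin N → K) (f : MvPolynomial ℕ K) :
    aeval x (toVars K N f) = aeval (fun m => ∑ i, x i ^ (m + 1)) f := by
  rw [toVars, comp_aeval_apply]
  simp [psum]

theorem polynomial_eval_aeval {σ : Type*} (g : σ → Polynomial K) (f : MvPolynomial σ K)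
    (t : K) :
    (aeval g f).eval t = aeval (fun m => (g m).eval t) f := by
  rw [← Polynomial.coe_aeval_eq_eval, comp_aeval_apply]

theorem sum_range_pow_two_mul_add_one {r : K} (hr0 : r ≠ 0) (hr : r ^ 2 ≠ 1) (N : ℕ) :
    ∑ i ∈ range N, r ^ (2 * i + 1) = (r⁻¹ - r)⁻¹ * (1 - (r ^ 2) ^ N) := by
  have hr' : r⁻¹ - r ≠ 0 := by
    rw [sub_ne_zero]
    exact fun h => hr (calc r ^ 2 = r⁻¹ * r := by rw [sq, h]
      _ = 1 := inv_mul_cancel₀ hr0)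
  simp_rw [pow_succ, pow_mul, ← sum_mul, geom_sum_eq hr]
  field_simp
  ring

variable {s : K}

/-- With `q = s²` and `0 ≤ i < N`, this is the point `x_{i+1} = q^{ν_i - (i+1) + 1/2}`. -/
theorem geomPoint_principal_apply (hs : s ≠ 0) {N : ℕ} (ν : Fin N → ℕ) (i : Fin N) :
    geomPoint (s⁻¹ ^ (2 * N - 1)) (s ^ 2) N ν i
      = s ^ (2 * ν i) * s⁻¹ ^ (2 * (i : ℕ) + 1) := by
  have h : 2 * N - 1 = 2 * (N - 1 - (i : ℕ)) + (2 * (i : ℕ) + 1) := by omega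
  calc geomPoint (s⁻¹ ^ (2 * N - 1)) (s ^ 2) N ν i
      = s⁻¹ ^ (2 * (N - 1 - (i : ℕ))) * s ^ (2 * (N - 1 - (i : ℕ)))
          * (s ^ (2 * ν i) * s⁻¹ ^ (2 * (i : ℕ) + 1)) := by
        rw [geomPoint, shifted, h]
        ring
    _ = s ^ (2 * ν i) * s⁻¹ ^ (2 * (i : ℕ) + 1) := by
        rw [inv_pow, inv_mul_cancel₀ (pow_ne_zero _ hs), one_mul]

/-- A polynomial in `t` whose value at `t = 0` is `p_{m+1}(q^{ν+ρ})` and whose value at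
`t = q^{-N}` is the `(m+1)`-st power sum of the `N` points `q^{ν_i - i + 1/2}`. -/
noncomputable def schurSpecFamily (s : K) (L : ℕ) (ν : ℕ → ℕ) (m : ℕ) : Polynomial K :=
  Polynomial.C (schurSpec K s L ν m)
    - Polynomial.C ((s ^ (m + 1) - s⁻¹ ^ (m + 1))⁻¹) * Polynomial.X ^ (m + 1)

theorem schurSpecFamily_eval_zero (L : ℕ) (ν : ℕ → ℕ) (m : ℕ) :
    (schurSpecFamily s L ν m).eval 0 = schurSpec K s L ν m := by
  simp [schurSpecFamily]

theorem sum_geomPoint_principal_pow (hs : Function.Injective (s ^ · : ℕ → K)) {L N : ℕ}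
    (hLN : L ≤ N) {ν : ℕ → ℕ} (hν : ∀ i, L ≤ i → ν i = 0) (m : ℕ) :
    ∑ i : Fin N, geomPoint (s⁻¹ ^ (2 * N - 1)) (s ^ 2) N (fun i => ν i) i ^ (m + 1)
      = (schurSpecFamily s L ν m).eval (s⁻¹ ^ (2 * N)) := by
  have hs0 : s ≠ 0 := fun h => hs.ne (by decide : (1 : ℕ) ≠ 2) (by simp [h])
  set r := s⁻¹ ^ (m + 1)
  have hr0 : r ≠ 0 := pow_ne_zero _ (inv_ne_zero hs0)
  have hr : r ^ 2 ≠ 1 := by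
    rw [← pow_mul, inv_pow, Ne, inv_eq_one, ← pow_zero s]
    exact fun h => by simpa using hs h
  have hodd : ∀ i : ℕ, s⁻¹ ^ ((m + 1) * (2 * i + 1)) = r ^ (2 * i + 1) :=
    fun i => pow_mul _ _ _
  calc ∑ i : Fin N, geomPoint (s⁻¹ ^ (2 * N - 1)) (s ^ 2) N (fun i => ν i) i ^ (m + 1)
      = ∑ i ∈ range N, s ^ (2 * (m + 1) * ν i) * s⁻¹ ^ ((m + 1) * (2 * i + 1)) := by
        rw [← Fin.sum_univ_eq_sum_range
          (fun i => s ^ (2 * (m + 1) * ν i) * s⁻¹ ^ ((m + 1) * (2 * i + 1)))]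
        refine sum_congr rfl fun i _ => ?_
        rw [geomPoint_principal_apply hs0, mul_pow, ← pow_mul, ← pow_mul]
        ring_nf
    _ = ∑ i ∈ range L, (s ^ (2 * (m + 1) * ν i) - 1) * s⁻¹ ^ ((m + 1) * (2 * i + 1))
          + ∑ i ∈ range N, r ^ (2 * i + 1) := by
        rw [sum_subset (range_subset_range.2 hLN) fun i _ hi => by
          rw [hν i (by simpa using hi), mul_zero, pow_zero, sub_self, zero_mul],
          ← sum_add_distrib]
        exact sum_congr rfl fun i _ => by rw [hodd]; ring
    _ = (schurSpecFamily s L ν m).eval (s⁻¹ ^ (2 * N)) := by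
        have hrinv : r⁻¹ = s ^ (m + 1) := by simp only [r, inv_pow, inv_inv]
        have hrN : (r ^ 2) ^ N = (s⁻¹ ^ (2 * N)) ^ (m + 1) := by
          simp only [r, ← pow_mul]
          ring_nf
        rw [sum_range_pow_two_mul_add_one hr0 hr, hrinv, hrN]
        simp only [schurSpecFamily, schurSpec, Polynomial.eval_sub, Polynomial.eval_mul,
          Polynomial.eval_C, Polynomial.eval_pow, Polynomial.eval_X]
        ring

theorem schurSpecFamily_symmetry_eval (hs : Function.Injective (s ^ · : ℕ → K))
    {lam mu : ℕ → ℕ} (hlam : Antitone lam) (hmu : Antitone mu) {Ll Lm N : ℕ}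
    (hlam0 : ∀ i, Ll ≤ i → lam i = 0) (hmu0 : ∀ i, Lm ≤ i → mu i = 0) (hLl : Ll ≤ N)
    (hLm : Lm ≤ N) {fl fm : MvPolynomial ℕ K}
    (hfl : IsSchur K N (fun i : Fin N => lam i) (toVars K N fl))
    (hfm : IsSchur K N (fun i : Fin N => mu i) (toVars K N fm)) :
    (aeval (schurSpecFamily s 0 fun _ => 0) fl * aeval (schurSpecFamily s Ll lam) fm).eval
        (s⁻¹ ^ (2 * N))
      = (aeval (schurSpecFamily s 0 fun _ => 0) fm * aeval (schurSpecFamily s Lm mu) fl).eval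
          (s⁻¹ ^ (2 * N)) := by
  have hs0 : s ≠ 0 := fun h => hs.ne (by decide : (1 : ℕ) ≠ 2) (by simp [h])
  have hq : Function.Injective ((s ^ 2) ^ · : ℕ → K) := fun a b h => by
    have := @hs (2 * a) (2 * b) (by simpa only [← pow_mul] using h)
    omega
  have hpoint : ∀ {L : ℕ} {ν : ℕ → ℕ}, (∀ i, L ≤ i → ν i = 0) → L ≤ N →
      ∀ f : MvPolynomial ℕ K,
      (aeval (schurSpecFamily s L ν) f).eval (s⁻¹ ^ (2 * N))
        = aeval (geomPoint (s⁻¹ ^ (2 * N - 1)) (s ^ 2) N fun i => ν i) (toVars K N f) := by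
    intro L ν hν hLN f
    simp only [polynomial_eval_aeval, aeval_toVars, sum_geomPoint_principal_pow hs hLN hν]
  have hval : Monotone (Fin.val : Fin N → ℕ) := Fin.val_strictMono.monotone
  rw [Polynomial.eval_mul, Polynomial.eval_mul, hpoint (fun _ _ => rfl) (Nat.zero_le N),
    hpoint hlam0 hLl, hpoint (fun _ _ => rfl) (Nat.zero_le N), hpoint hmu0 hLm]
  exact hfl.aeval_geomPoint_symmetry (pow_ne_zero _ (inv_ne_zero hs0)) hq
    (hlam.comp_monotone hval) (hmu.comp_monotone hval) hfm

end Specialization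

theorem RatFunc.X_pow_injective (F : Type*) [Field F] :
    Function.Injective (RatFunc.X ^ · : ℕ → RatFunc F) := fun a b h => by
  have h' : algebraMap (Polynomial F) (RatFunc F) (Polynomial.X ^ a)
      = algebraMap (Polynomial F) (RatFunc F) (Polynomial.X ^ b) := by
    simpa only [map_pow, RatFunc.algebraMap_X] using h
  simpa using congrArg Polynomial.natDegree (RatFunc.algebraMap_injective F h')

/-- The symmetry `s_λ(q^ρ) s_μ(q^{λ+ρ}) = s_μ(q^ρ) s_λ(q^{μ+ρ})` of the principal
specializations of Schur functions. Here `fl`, `fm` are the expressions of the Schur functions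
`s_λ`, `s_μ` in terms of the power sums (so that in any number `N` of variables, large enough,
they evaluate to the Schur polynomials), and `s = q^{1/2}` is a generic parameter. -/
theorem schur_principal_specialization_symmetry (F : Type*) [Field F]
    (lam mu : ℕ → ℕ) (hlam : Antitone lam) (hmu : Antitone mu)
    (Ll Lm : ℕ) (hLl : ∀ i, lam i ≠ 0 ↔ i < Ll) (hLm : ∀ i, mu i ≠ 0 ↔ i < Lm)
    (fl fm : MvPolynomial ℕ (RatFunc F))
    (hfl : ∀ N, Ll ≤ N → IsSchur (RatFunc F) N (fun i : Fin N => lam i)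
      (toVars (RatFunc F) N fl))
    (hfm : ∀ N, Lm ≤ N → IsSchur (RatFunc F) N (fun i : Fin N => mu i)
      (toVars (RatFunc F) N fm)) :
    MvPolynomial.aeval (schurSpec (RatFunc F) RatFunc.X 0 (fun _ => 0)) fl *
        MvPolynomial.aeval (schurSpec (RatFunc F) RatFunc.X Ll lam) fm
      = MvPolynomial.aeval (schurSpec (RatFunc F) RatFunc.X 0 (fun _ => 0)) fm *
          MvPolynomial.aeval (schurSpec (RatFunc F) RatFunc.X Lm mu) fl := by
  have hs := RatFunc.X_pow_injective F
  have hlam0 : ∀ i, Ll ≤ i → lam i = 0 := fun i hi => by simpa using mt (hLl i).1 hi.not_gt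
  have hmu0 : ∀ i, Lm ≤ i → mu i = 0 := fun i hi => by simpa using mt (hLm i).1 hi.not_gt
  have hsample :
      Function.Injective fun k : ℕ => (RatFunc.X : RatFunc F)⁻¹ ^ (2 * (Ll + Lm + k)) :=
    fun a b h => by
      have := @hs (2 * (Ll + Lm + a)) (2 * (Ll + Lm + b))
        (inv_injective (by simpa only [inv_pow] using h))
      omega
  have hfamily := Polynomial.eq_of_infinite_eval_eq _ _ <| Set.infinite_of_injective_forall_mem
    hsample fun k => schurSpecFamily_symmetry_eval hs hlam hmu hlam0 hmu0 (by omega) (by omega)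
      (hfl _ (by omega)) (hfm _ (by omega))
  simpa only [Polynomial.eval_mul, polynomial_eval_aeval, schurSpecFamily_eval_zero]
    using congrArg (Polynomial.eval 0) hfamily
end

section
/- The restriction of the Macdonald operator to one fewer variable satisfies D_N^r |_{x_N = 0} = t^r D_{N-1}^r + t^{r-1} D_{N-1}^{r-1} as operators on symmetric polynomials in x_1, ..., x_{N-1}; equivalently D_N(w̃)|_{x_N=0} = (1 + w̃) D_{N-1}(t w̃). -/
open Finset MvPolynomial

variable (K : Type*) [Field K]

/-- The `q`-shift `∏_{i ∈ I} T_{q,x_i}`: substitutes `x_i ↦ q x_i` for `i ∈ I`. -/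
noncomputable def qShift (N : ℕ) (q : K) (I : Finset (Fin N)) (P : MvPolynomial (Fin N) K) :
    MvPolynomial (Fin N) K :=
  MvPolynomial.aeval (fun j => if j ∈ I then C q * X j else X j) P

/-- The Macdonald operator `D_N^r` applied to a polynomial `P`, with values in the field of
rational functions:
`D_N^r P = t^{r(r-1)/2} ∑_{|I|=r} ∏_{i∈I, j∉I} (t x_i - x_j)/(x_i - x_j) ∏_{i∈I} T_{q,x_i} P`. -/
noncomputable def macOp (N : ℕ) (q t : K) (r : ℕ) (P : MvPolynomial (Fin N) K) :
    FractionRing (MvPolynomial (Fin N) K) :=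
  algebraMap (MvPolynomial (Fin N) K) _ (C (t ^ (r * (r - 1) / 2))) *
    ∑ I ∈ Finset.powersetCard r Finset.univ,
      (∏ i ∈ I, ∏ j ∈ Finset.univ \ I,
          algebraMap (MvPolynomial (Fin N) K) _ (C t * X i - X j) /
            algebraMap (MvPolynomial (Fin N) K) _ (X i - X j)) *
        algebraMap (MvPolynomial (Fin N) K) _ (qShift K N q I P)

/-- The substitution setting the last variable to zero,
`MvPolynomial (Fin (N+1)) K → MvPolynomial (Fin N) K`. -/
noncomputable def setLast (N : ℕ) : MvPolynomial (Fin (N + 1)) K →ₐ[K] MvPolynomial (Fin N) K :=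
  MvPolynomial.aeval (fun i : Fin (N + 1) =>
    if h : (i : ℕ) < N then (X ⟨i, h⟩ : MvPolynomial (Fin N) K) else 0)

lemma setLast_X_castSucc (N : ℕ) (k : Fin N) :
    setLast K N (X (Fin.castSucc k)) = X k := by
  simp [setLast, Fin.castSucc]

lemma setLast_X_last (N : ℕ) : setLast K N (X (Fin.last N)) = 0 := by
  simp [setLast]

lemma setLast_C (N : ℕ) (a : K) : setLast K N (C a) = C a := by
  simp [setLast]

lemma qShift_setLast (N : ℕ) (q : K) (G : MvPolynomial (Fin N) K)
    (I : Finset (Fin (N+1))) (I' : Finset (Fin N))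
    (h : ∀ k : Fin N, Fin.castSucc k ∈ I ↔ k ∈ I') :
    setLast K N (qShift K (N+1) q I (rename Fin.castSucc G)) = qShift K N q I' G := by
  rw [qShift, aeval_rename, ← AlgHom.comp_apply, comp_aeval]
  have hfun : (fun i : Fin N => setLast K N
        (((fun j : Fin (N+1) => if j ∈ I then C q * X j else X j) ∘ Fin.castSucc) i))
      = fun k : Fin N => if k ∈ I' then C q * X k else X k := by
    funext k
    by_cases hk : k ∈ I'
    · simp only [Function.comp_apply, if_pos ((h k).2 hk), if_pos hk, map_mul,
        setLast_C, setLast_X_castSucc]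
    · simp only [Function.comp_apply, if_neg (fun hh => hk ((h k).1 hh)), if_neg hk,
        setLast_X_castSucc]
  rw [hfun, qShift]


@[simp] lemma castLE_succ_eq (N : ℕ) (h : N ≤ N+1) (x : Fin N) :
    Fin.castLE h x = Fin.castSucc x := rfl

@[simp] lemma castSucc_ne_last' (N : ℕ) (x : Fin N) :
    ¬ Fin.castSucc x = Fin.last N := (Fin.castSucc_lt_last x).ne

lemma castSuccEmb_eq (N : ℕ) (x : Fin N) : (Fin.castSuccEmb x : Fin (N+1)) = Fin.castSucc x := rfl

lemma mem_map_castSuccEmb (N : ℕ) (S : Finset (Fin N)) (j : Fin (N+1)) :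
    j ∈ S.map Fin.castSuccEmb ↔ ∃ x ∈ S, Fin.castSucc x = j := by
  simp only [Finset.mem_map, castSuccEmb_eq]

lemma last_not_mem_map (N : ℕ) (S : Finset (Fin N)) :
    Fin.last N ∉ S.map Fin.castSuccEmb := by
  rw [mem_map_castSuccEmb]
  rintro ⟨x, -, hx⟩
  exact absurd hx (Fin.castSucc_lt_last x).ne

lemma castSucc_mem_map (N : ℕ) (S : Finset (Fin N)) (k : Fin N) :
    Fin.castSucc k ∈ S.map Fin.castSuccEmb ↔ k ∈ S := by
  rw [mem_map_castSuccEmb]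
  constructor
  · rintro ⟨x, hx, hxe⟩; rwa [← Fin.castSucc_injective N hxe]
  · exact fun h => ⟨k, h, rfl⟩

lemma compl_map (N : ℕ) (I' : Finset (Fin N)) :
    (univ : Finset (Fin (N+1))) \ I'.map Fin.castSuccEmb
      = Finset.cons (Fin.last N) ((univ \ I').map Fin.castSuccEmb) (by simp) := by
  ext j
  induction j using Fin.lastCases with
  | last => simp [last_not_mem_map]
  | cast i => simp [castSucc_mem_map, (Fin.castSucc_lt_last i).ne, last_not_mem_map]

lemma compl_insert (N : ℕ) (I' : Finset (Fin N)) :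
    (univ : Finset (Fin (N+1))) \ insert (Fin.last N) (I'.map Fin.castSuccEmb)
      = (univ \ I').map Fin.castSuccEmb := by
  ext j
  induction j using Fin.lastCases with
  | last => simp [last_not_mem_map]
  | cast i => simp [castSucc_mem_map, (Fin.castSucc_lt_last i).ne, last_not_mem_map]

lemma phiX_ne (N : ℕ) (k : Fin N) :
    algebraMap (MvPolynomial (Fin N) K) (FractionRing (MvPolynomial (Fin N) K)) (X k) ≠ 0 := by
  exact (map_ne_zero_iff _ (IsFractionRing.injective _ _)).2 (X_ne_zero k)

lemma termA (N : ℕ) (q t : K) (G : MvPolynomial (Fin N) K) (I' : Finset (Fin N)) :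
    (∏ i ∈ I'.map Fin.castSuccEmb, ∏ j ∈ (univ : Finset (Fin (N+1))) \ I'.map Fin.castSuccEmb,
        algebraMap (MvPolynomial (Fin N) K) (FractionRing (MvPolynomial (Fin N) K))
            (setLast K N (C t * X i - X j)) /
          algebraMap (MvPolynomial (Fin N) K) (FractionRing (MvPolynomial (Fin N) K))
            (setLast K N (X i - X j))) *
      algebraMap (MvPolynomial (Fin N) K) (FractionRing (MvPolynomial (Fin N) K))
        (setLast K N (qShift K (N+1) q (I'.map Fin.castSuccEmb) (rename Fin.castSucc G)))
    = algebraMap (MvPolynomial (Fin N) K) (FractionRing (MvPolynomial (Fin N) K)) (C t) ^ I'.card *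
      ((∏ i ∈ I', ∏ j ∈ univ \ I',
          algebraMap (MvPolynomial (Fin N) K) (FractionRing (MvPolynomial (Fin N) K))
              (C t * X i - X j) /
            algebraMap (MvPolynomial (Fin N) K) (FractionRing (MvPolynomial (Fin N) K))
              (X i - X j)) *
        algebraMap (MvPolynomial (Fin N) K) (FractionRing (MvPolynomial (Fin N) K))
          (qShift K N q I' G)) := by
  set φ := algebraMap (MvPolynomial (Fin N) K) (FractionRing (MvPolynomial (Fin N) K)) with hφ
  rw [compl_map, Finset.prod_map,
    qShift_setLast K N q G _ I' (castSucc_mem_map N I')]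
  have step : ∀ k ∈ I',
      (∏ j ∈ Finset.cons (Fin.last N) ((univ \ I').map Fin.castSuccEmb) (last_not_mem_map N _),
        φ (setLast K N (C t * X (Fin.castSuccEmb k) - X j)) /
          φ (setLast K N (X (Fin.castSuccEmb k) - X j)))
      = φ (C t) * ∏ j ∈ univ \ I', φ (C t * X k - X j) / φ (X k - X j) := by
    intro k _
    rw [Finset.prod_cons, Finset.prod_map]
    congr 1
    · simp only [castSuccEmb_eq, map_sub, map_mul, setLast_C, setLast_X_castSucc,
        setLast_X_last, sub_zero]
      rw [mul_div_assoc, div_self (phiX_ne K N k), mul_one]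
    · refine Finset.prod_congr rfl fun j _ => ?_
      simp only [castSuccEmb_eq, map_sub, map_mul, setLast_C, setLast_X_castSucc]
  rw [Finset.prod_congr rfl step, Finset.prod_mul_distrib, Finset.prod_const, mul_assoc]

lemma termB (N : ℕ) (q t : K) (G : MvPolynomial (Fin N) K) (I' : Finset (Fin N)) :
    (∏ i ∈ insert (Fin.last N) (I'.map Fin.castSuccEmb),
        ∏ j ∈ (univ : Finset (Fin (N+1))) \ insert (Fin.last N) (I'.map Fin.castSuccEmb),
        algebraMap (MvPolynomial (Fin N) K) (FractionRing (MvPolynomial (Fin N) K))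
            (setLast K N (C t * X i - X j)) /
          algebraMap (MvPolynomial (Fin N) K) (FractionRing (MvPolynomial (Fin N) K))
            (setLast K N (X i - X j))) *
      algebraMap (MvPolynomial (Fin N) K) (FractionRing (MvPolynomial (Fin N) K))
        (setLast K N (qShift K (N+1) q (insert (Fin.last N) (I'.map Fin.castSuccEmb))
          (rename Fin.castSucc G)))
    = (∏ i ∈ I', ∏ j ∈ univ \ I',
          algebraMap (MvPolynomial (Fin N) K) (FractionRing (MvPolynomial (Fin N) K))
              (C t * X i - X j) /
            algebraMap (MvPolynomial (Fin N) K) (FractionRing (MvPolynomial (Fin N) K))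
              (X i - X j)) *
        algebraMap (MvPolynomial (Fin N) K) (FractionRing (MvPolynomial (Fin N) K))
          (qShift K N q I' G) := by
  set φ := algebraMap (MvPolynomial (Fin N) K) (FractionRing (MvPolynomial (Fin N) K)) with hφ
  have hmem : ∀ k : Fin N,
      Fin.castSucc k ∈ insert (Fin.last N) (I'.map Fin.castSuccEmb) ↔ k ∈ I' := by
    intro k
    simp [Finset.mem_insert, castSucc_mem_map]
  rw [compl_insert, Finset.prod_insert (last_not_mem_map N _),
    qShift_setLast K N q G _ I' hmem]
  have hlast : (∏ j ∈ (univ \ I').map Fin.castSuccEmb,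
      φ (setLast K N (C t * X (Fin.last N) - X j)) /
        φ (setLast K N (X (Fin.last N) - X j))) = 1 := by
    rw [Finset.prod_map]
    refine Finset.prod_eq_one fun j _ => ?_
    simp only [castSuccEmb_eq, map_sub, map_mul, setLast_C, setLast_X_castSucc,
      setLast_X_last, mul_zero, zero_sub, map_neg]
    exact div_self (neg_ne_zero.2 (phiX_ne K N j))
  rw [hlast, one_mul, Finset.prod_map]
  congr 1
  refine Finset.prod_congr rfl fun k _ => ?_
  rw [Finset.prod_map]
  refine Finset.prod_congr rfl fun j _ => ?_
  simp only [castSuccEmb_eq, map_sub, map_mul, setLast_C, setLast_X_castSucc]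

lemma sumA (N : ℕ) (q t : K) (G : MvPolynomial (Fin N) K) (s : ℕ) :
    ∑ I ∈ Finset.powersetCard (s+1) ((univ : Finset (Fin N)).map Fin.castSuccEmb),
        (∏ i ∈ I, ∏ j ∈ univ \ I,
            algebraMap (MvPolynomial (Fin N) K) (FractionRing (MvPolynomial (Fin N) K))
                (setLast K N (C t * X i - X j)) /
              algebraMap (MvPolynomial (Fin N) K) (FractionRing (MvPolynomial (Fin N) K))
                (setLast K N (X i - X j))) *
          algebraMap (MvPolynomial (Fin N) K) (FractionRing (MvPolynomial (Fin N) K))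
            (setLast K N (qShift K (N + 1) q I (rename Fin.castSucc G)))
      = algebraMap (MvPolynomial (Fin N) K) (FractionRing (MvPolynomial (Fin N) K))
            (C t) ^ (s+1) *
          ∑ I' ∈ Finset.powersetCard (s+1) (univ : Finset (Fin N)),
            (∏ i ∈ I', ∏ j ∈ univ \ I',
                algebraMap (MvPolynomial (Fin N) K) (FractionRing (MvPolynomial (Fin N) K))
                    (C t * X i - X j) /
                  algebraMap (MvPolynomial (Fin N) K) (FractionRing (MvPolynomial (Fin N) K))
                    (X i - X j)) *
              algebraMap (MvPolynomial (Fin N) K) (FractionRing (MvPolynomial (Fin N) K))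
                (qShift K N q I' G) := by
  rw [Finset.powersetCard_map, Finset.sum_map, Finset.mul_sum]
  refine Finset.sum_congr rfl fun I' hI' => ?_
  have hc : I'.card = s + 1 := (Finset.mem_powersetCard.1 hI').2
  simp only [RelEmbedding.coe_toEmbedding, Finset.mapEmbedding_apply]
  rw [termA, hc]

lemma sumB (N : ℕ) (q t : K) (G : MvPolynomial (Fin N) K) (s : ℕ) :
    ∑ I ∈ (Finset.powersetCard s
          ((univ : Finset (Fin N)).map Fin.castSuccEmb)).image (insert (Fin.last N)),
        (∏ i ∈ I, ∏ j ∈ univ \ I,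
            algebraMap (MvPolynomial (Fin N) K) (FractionRing (MvPolynomial (Fin N) K))
                (setLast K N (C t * X i - X j)) /
              algebraMap (MvPolynomial (Fin N) K) (FractionRing (MvPolynomial (Fin N) K))
                (setLast K N (X i - X j))) *
          algebraMap (MvPolynomial (Fin N) K) (FractionRing (MvPolynomial (Fin N) K))
            (setLast K N (qShift K (N + 1) q I (rename Fin.castSucc G)))
      = ∑ I' ∈ Finset.powersetCard s (univ : Finset (Fin N)),
            (∏ i ∈ I', ∏ j ∈ univ \ I',
                algebraMap (MvPolynomial (Fin N) K) (FractionRing (MvPolynomial (Fin N) K))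
                    (C t * X i - X j) /
                  algebraMap (MvPolynomial (Fin N) K) (FractionRing (MvPolynomial (Fin N) K))
                    (X i - X j)) *
              algebraMap (MvPolynomial (Fin N) K) (FractionRing (MvPolynomial (Fin N) K))
                (qShift K N q I' G) := by
  rw [Finset.sum_image]
  · rw [Finset.powersetCard_map, Finset.sum_map]
    refine Finset.sum_congr rfl fun I' hI' => ?_
    simp only [RelEmbedding.coe_toEmbedding, Finset.mapEmbedding_apply]
    exact termB K N q t G I'
  · intro J1 h1 J2 h2 hins
    have hn1 : Fin.last N ∉ J1 := fun h =>
      last_not_mem_map N univ ((Finset.mem_powersetCard.1 h1).1 h)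
    have hn2 : Fin.last N ∉ J2 := fun h =>
      last_not_mem_map N univ ((Finset.mem_powersetCard.1 h2).1 h)
    rw [← Finset.erase_insert hn1, hins, Finset.erase_insert hn2]

lemma exp_split (s : ℕ) : (s+1) * s / 2 = s + s * (s-1) / 2 := by
  have h1 := Nat.choose_two_right (s+1)
  have h2 := Nat.choose_two_right s
  have h3 : (s+1).choose 2 = s.choose 1 + s.choose 2 := Nat.choose_succ_succ s 1
  simp only [Nat.choose_one_right, Nat.add_sub_cancel] at h1 h3
  omega


/-- The restriction of the Macdonald operator to one fewer variable:
`D_{N+1}^r |_{x_{N+1}=0} = t^r D_N^r + t^{r-1} D_N^{r-1}` as operators on symmetric polynomials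
in the first `N` variables, i.e. for every symmetric polynomial `G` in `x₁,…,x_N`, applying
`D_{N+1}^r` to `G` (regarded as a polynomial in `x₁,…,x_{N+1}`) and then setting `x_{N+1} = 0`
gives `t^r D_N^r G + t^{r-1} D_N^{r-1} G` (the second term being absent for `r = 0`).
Equivalently `D_{N+1}(w̃)|_{x_{N+1}=0} = (1+w̃) D_N(t w̃)`. -/
theorem macdonald_operator_restriction (N : ℕ) (q t : K) (r : ℕ)
    (G : MvPolynomial (Fin N) K) (hG : G.IsSymmetric) :
    algebraMap (MvPolynomial (Fin N) K) (FractionRing (MvPolynomial (Fin N) K))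
          (C (t ^ (r * (r - 1) / 2))) *
        ∑ I ∈ Finset.powersetCard r (Finset.univ : Finset (Fin (N + 1))),
          (∏ i ∈ I, ∏ j ∈ Finset.univ \ I,
              algebraMap (MvPolynomial (Fin N) K) (FractionRing (MvPolynomial (Fin N) K))
                  (setLast K N (C t * X i - X j)) /
                algebraMap (MvPolynomial (Fin N) K) (FractionRing (MvPolynomial (Fin N) K))
                  (setLast K N (X i - X j))) *
            algebraMap (MvPolynomial (Fin N) K) (FractionRing (MvPolynomial (Fin N) K))
              (setLast K N (qShift K (N + 1) q I (MvPolynomial.rename Fin.castSucc G)))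
      = algebraMap (MvPolynomial (Fin N) K) (FractionRing (MvPolynomial (Fin N) K)) (C (t ^ r)) *
            macOp K N q t r G +
          (if r = 0 then 0
           else
             algebraMap (MvPolynomial (Fin N) K) (FractionRing (MvPolynomial (Fin N) K))
                 (C (t ^ (r - 1))) *
               macOp K N q t (r - 1) G) := by
  classical
  obtain rfl | ⟨s, rfl⟩ : r = 0 ∨ ∃ s, r = s + 1 := by
    rcases r with _ | s
    · exact Or.inl rfl
    · exact Or.inr ⟨s, rfl⟩
  · -- r = 0
    simp only [if_pos rfl, add_zero, macOp, Finset.powersetCard_zero, Finset.sum_singleton,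
      Finset.prod_empty, one_mul, pow_zero, map_one]
    rw [qShift_setLast K N q G ∅ ∅ (by simp)]
    simp
  · -- r = s + 1
    simp only [if_neg (Nat.succ_ne_zero s), Nat.add_sub_cancel, macOp]
    have hset : Finset.powersetCard (s+1) (univ : Finset (Fin (N+1)))
        = Finset.powersetCard (s+1) ((univ : Finset (Fin N)).map Fin.castSuccEmb)
          ∪ (Finset.powersetCard s ((univ : Finset (Fin N)).map Fin.castSuccEmb)).image
              (insert (Fin.last N)) := by
      rw [Fin.univ_castSuccEmb, Finset.cons_eq_insert,
        Finset.powersetCard_succ_insert (last_not_mem_map N _)]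
    have hdisj : Disjoint
        (Finset.powersetCard (s+1) ((univ : Finset (Fin N)).map Fin.castSuccEmb))
        ((Finset.powersetCard s ((univ : Finset (Fin N)).map Fin.castSuccEmb)).image
          (insert (Fin.last N))) := by
      refine Finset.disjoint_left.2 fun I hI hI2 => ?_
      obtain ⟨J, hJ, rfl⟩ := Finset.mem_image.1 hI2
      have hsub := (Finset.mem_powersetCard.1 hI).1
      exact last_not_mem_map N univ (hsub (Finset.mem_insert_self _ _))
    rw [hset, Finset.sum_union hdisj, sumA, sumB, mul_add]
    congr 1
    · rw [← map_pow, ← C_pow, ← mul_assoc, ← map_mul, ← C_mul, mul_comm (t ^ ((s+1) * s / 2)),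
        C_mul, map_mul, mul_assoc]
    · rw [show t ^ ((s+1) * s / 2) = t ^ s * t ^ (s * (s-1) / 2) by
        rw [← pow_add]; exact congrArg (t ^ ·) (exp_split s),
        C_mul, map_mul, mul_assoc]
end
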